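/- Let j ∈ C_c^∞(ℝ³ × ℝ; ℂ³) be a smooth compactly supported function, and define its four-dimensional Fourier transform ĵ(p₀, p) = (2π)^{-2} ∫_{ℝ³×ℝ} e^{i(p₀ t − p·x)} j(x,t) dx dt for (p₀,p) ∈ ℝ × ℝ³. Then the restriction of ĵ to the light cone is square integrable with respect to the relativistic measure: ∫_{ℝ³} |ĵ(|p|, p)|² dp/(2|p|) < ∞. -/

import Mathlib

open MeasureTheory Complex

noncomputable section

abbrev E3 := EuclideanSpace ℝ (Fin 3)
abbrev C3 := EuclideanSpace ℂ (Fin 3)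

open Real FourierTransform Set Metric in
/-- The bilinear pairing `L (x,t) (p,p₀) = (2π)⁻¹ * (⟪x,p⟫ - p₀ t)`. -/
def Lpair : (E3 × ℝ) →L[ℝ] (E3 × ℝ) →L[ℝ] ℝ :=
  LinearMap.mkContinuous₂
    (LinearMap.mk₂ ℝ (fun v w => (2 * π)⁻¹ * ((inner ℝ v.1 w.1 : ℝ) - w.2 * v.2))
      (fun v v' w => by simp [inner_add_left]; ring)
      (fun c v w => by simp [inner_smul_left]; ring)
      (fun v w w' => by simp [inner_add_right]; ring)
      (fun c v w => by simp [inner_smul_right]; ring))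
    ((2 * π)⁻¹ * 2)
    (fun v w => by
      have h1 : |(inner ℝ v.1 w.1 : ℝ)| ≤ ‖v‖ * ‖w‖ :=
        (abs_real_inner_le_norm _ _).trans
          (mul_le_mul (norm_fst_le v) (norm_fst_le w) (norm_nonneg _) (norm_nonneg _))
      have h2 : |w.2 * v.2| ≤ ‖v‖ * ‖w‖ := by
        rw [abs_mul, mul_comm]
        exact mul_le_mul ((Real.norm_eq_abs _ ▸ norm_snd_le v))
          ((Real.norm_eq_abs _ ▸ norm_snd_le w)) (abs_nonneg _) (norm_nonneg _)
      have hpi : (0:ℝ) < (2 * π)⁻¹ := by positivity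
      simp only [LinearMap.mk₂_apply, Real.norm_eq_abs, abs_mul, abs_of_pos hpi]
      calc (2 * π)⁻¹ * |(inner ℝ v.1 w.1 : ℝ) - w.2 * v.2|
          ≤ (2 * π)⁻¹ * (|(inner ℝ v.1 w.1 : ℝ)| + |w.2 * v.2|) := by
            gcongr; exact abs_sub _ _
        _ ≤ (2 * π)⁻¹ * (‖v‖ * ‖w‖ + ‖v‖ * ‖w‖) := by gcongr
        _ = (2 * π)⁻¹ * 2 * ‖v‖ * ‖w‖ := by ring)

open Real in
lemma Lpair_apply (v w : E3 × ℝ) :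
    Lpair v w = (2 * π)⁻¹ * ((inner ℝ v.1 w.1 : ℝ) - w.2 * v.2) := rfl

instance : MeasureTheory.Measure.IsAddHaarMeasure (volume : Measure (E3 × ℝ)) :=
  MeasureTheory.Measure.prod.instIsAddHaarMeasure _ _

open Real Set Metric in
lemma ball_lintegral_inv_norm_lt_top :
    ∫⁻ p : E3 in Metric.ball 0 1, ENNReal.ofReal ‖p‖⁻¹ < ⊤ := by
  have hmeas : Measurable fun p : E3 => ‖p‖⁻¹ := measurable_norm.inv
  rw [lintegral_eq_lintegral_meas_le _ (Filter.Eventually.of_forall fun p => by positivity)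
    hmeas.aemeasurable]
  have hset : ∀ t : ℝ, MeasurableSet {a : E3 | t ≤ ‖a‖⁻¹} :=
    fun t => measurableSet_le measurable_const hmeas
  have hre : ∀ t : ℝ, (volume.restrict (Metric.ball (0:E3) 1)) {a : E3 | t ≤ ‖a‖⁻¹} =
      volume ({a : E3 | t ≤ ‖a‖⁻¹} ∩ Metric.ball 0 1) := fun t =>
    Measure.restrict_apply (hset t)
  simp only [hre]
  set vB := volume (Metric.ball (0:E3) 1) with hvB
  calc ∫⁻ t in Ioi 0, volume ({a : E3 | t ≤ ‖a‖⁻¹} ∩ Metric.ball 0 1)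
      ≤ ∫⁻ t in Ioc 0 1 ∪ Ioi 1, volume ({a : E3 | t ≤ ‖a‖⁻¹} ∩ Metric.ball 0 1) :=
        lintegral_mono_set Ioi_subset_Ioc_union_Ioi
    _ ≤ (∫⁻ t in Ioc 0 1, volume ({a : E3 | t ≤ ‖a‖⁻¹} ∩ Metric.ball 0 1)) +
        ∫⁻ t in Ioi 1, volume ({a : E3 | t ≤ ‖a‖⁻¹} ∩ Metric.ball 0 1) :=
        lintegral_union_le _ _ _
    _ < ⊤ := by
        refine ENNReal.add_lt_top.2 ⟨?_, ?_⟩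
        · calc (∫⁻ t in Ioc 0 1, volume ({a : E3 | t ≤ ‖a‖⁻¹} ∩ Metric.ball 0 1))
              ≤ ∫⁻ _ in Ioc (0:ℝ) 1, vB :=
                setLIntegral_mono measurable_const
                  (fun t _ => measure_mono inter_subset_right)
            _ = vB * volume (Ioc (0:ℝ) 1) := setLIntegral_const _ _
            _ < ⊤ := ENNReal.mul_lt_top measure_ball_lt_top (by simp)
        · have hb : ∀ t ∈ Ioi (1:ℝ), volume ({a : E3 | t ≤ ‖a‖⁻¹} ∩ Metric.ball 0 1)
              ≤ ENNReal.ofReal (t ^ (-3 : ℝ)) * vB := by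
            intro t ht
            have ht1 : (1:ℝ) < t := ht
            have ht0 : (0:ℝ) < t := lt_trans one_pos ht1
            have hsub : {a : E3 | t ≤ ‖a‖⁻¹} ∩ Metric.ball 0 1 ⊆
                Metric.closedBall 0 t⁻¹ := by
              intro a ⟨ha, _⟩
              simp only [mem_setOf_eq] at ha
              rcases eq_or_ne a 0 with rfl | h0
              · simp at ha; linarith
              · have hna : 0 < ‖a‖ := norm_pos_iff.2 h0
                rw [mem_closedBall_zero_iff]
                exact (le_inv_comm₀ ht0 hna).1 ha
            refine (measure_mono hsub).trans ?_
            rw [Measure.addHaar_closedBall _ _ (by positivity)]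
            have : (t⁻¹) ^ (Module.finrank ℝ E3) = t ^ (-3 : ℝ) := by
              rw [finrank_euclideanSpace_fin]
              rw [← Real.rpow_natCast t⁻¹ 3, ← Real.rpow_neg_one t,
                ← Real.rpow_mul ht0.le]
              norm_num
            rw [this]
          calc (∫⁻ t in Ioi 1, volume ({a : E3 | t ≤ ‖a‖⁻¹} ∩ Metric.ball 0 1))
              ≤ ∫⁻ t in Ioi (1:ℝ), ENNReal.ofReal (t ^ (-3 : ℝ)) * vB :=
                setLIntegral_mono ((measurable_id.pow_const _).ennreal_ofReal.mul_const _) hb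
            _ = (∫⁻ t in Ioi (1:ℝ), ENNReal.ofReal (t ^ (-3 : ℝ))) * vB :=
                lintegral_mul_const' _ _ measure_ball_lt_top.ne
            _ < ⊤ := ENNReal.mul_lt_top
                ((integrableOn_Ioi_rpow_of_lt (by norm_num) one_pos).setLIntegral_lt_top)
                measure_ball_lt_top

open Real FourierTransform Set Metric in
/-- for a smooth compactly supported current `j : ℝ³ × ℝ → ℂ³`, the restriction
of its 4-dimensional Fourier transform `ĵ(p₀,p) = (2π)⁻² ∫ e^{i(p₀ t − p·x)} j(x,t) dx dt`
to the light cone `p₀ = |p|` is square integrable for the measure `dp/(2|p|)`. -/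
theorem fourier_restriction_sq_integrable
    (j : E3 × ℝ → C3) (hj : ContDiff ℝ (⊤ : ℕ∞) j) (hsupp : HasCompactSupport j)
    (jhat : ℝ → E3 → C3)
    (hjhat : ∀ p₀ p, jhat p₀ p =
      (((2 * Real.pi : ℝ)^2 : ℝ) : ℂ)⁻¹ •
        ∫ z : E3 × ℝ,
          Complex.exp (Complex.I * ((p₀ * z.2 - (inner ℝ p z.1 : ℝ) : ℝ) : ℂ)) • j z) :
    ∫⁻ p : E3, ENNReal.ofReal (‖jhat ‖p‖ p‖^2 / (2 * ‖p‖)) < ⊤ := by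
  set F : E3 × ℝ → C3 := VectorFourier.fourierIntegral 𝐞 volume Lpair.toLinearMap₁₂ j with hF
  -- the defining integral is the vector Fourier integral for the pairing `Lpair`
  have key : ∀ p₀ : ℝ, ∀ p : E3, jhat p₀ p = (((2 * π : ℝ)^2 : ℝ) : ℂ)⁻¹ • F (p, p₀) := by
    intro p₀ p
    rw [hjhat]
    congr 1
    rw [hF, VectorFourier.fourierIntegral]
    refine integral_congr_ae (Filter.Eventually.of_forall fun z => ?_)
    simp only [Circle.smul_def, Real.fourierChar_apply, ContinuousLinearMap.toLinearMap₁₂_apply_apply_apply,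
      Lpair_apply]
    congr 1
    have hre : 2 * π * -((2 * π)⁻¹ * ((inner ℝ z.1 p : ℝ) - p₀ * z.2)) =
        p₀ * z.2 - (inner ℝ p z.1 : ℝ) := by
      rw [real_inner_comm]
      field_simp
      ring
    rw [hre, mul_comm]
  have hc : ‖(((2 * π : ℝ)^2 : ℝ) : ℂ)⁻¹‖ = ((2 * π)^2)⁻¹ := by
    rw [norm_inv, Complex.norm_real, Real.norm_eq_abs, abs_of_pos (by positivity)]
  have normkey : ∀ p₀ : ℝ, ∀ p : E3, ‖jhat p₀ p‖ = ((2 * π)^2)⁻¹ * ‖F (p, p₀)‖ := by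
    intro p₀ p
    rw [key, norm_smul, hc]
  -- global bound
  set A : ℝ := ((2 * π)^2)⁻¹ * ∫ v : E3 × ℝ, ‖j v‖ with hA
  have hA0 : 0 ≤ A := by
    have : 0 ≤ ∫ v : E3 × ℝ, ‖j v‖ := integral_nonneg fun v => norm_nonneg _
    positivity
  have hAbd : ∀ p₀ : ℝ, ∀ p : E3, ‖jhat p₀ p‖ ≤ A := by
    intro p₀ p
    rw [normkey, hA]
    exact mul_le_mul_of_nonneg_left
      (VectorFourier.norm_fourierIntegral_le_integral_norm _ _ _ _ _) (by positivity)
  -- decay bound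
  have h'f : ∀ (k n : ℕ), (k : ℕ∞) ≤ 0 → (n : ℕ∞) ≤ ⊤ →
      Integrable (fun v : E3 × ℝ => ‖v‖ ^ k * ‖iteratedFDeriv ℝ n j v‖) volume := by
    intro k n _ _
    apply Continuous.integrable_of_hasCompactSupport
    · exact (continuous_norm.pow k).mul (hj.continuous_iteratedFDeriv (by exact_mod_cast le_top)).norm
    · exact (hsupp.iteratedFDeriv n).norm.mul_left
  obtain ⟨C, hC⟩ : ∃ C : ℝ, ∀ v w : E3 × ℝ, |Lpair v w| ^ 3 * ‖F w‖ ≤ ‖v‖ ^ 3 * C := by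
    have H := fun (v w : E3 × ℝ) =>
      VectorFourier.pow_mul_norm_iteratedFDeriv_fourierIntegral_le (L := Lpair) (K := 0) (N := ⊤)
        (hj.of_le (by simp)) h'f (k := 0) (n := 3) le_rfl le_top v w
    simp only [pow_zero, one_mul, norm_iteratedFDeriv_zero, mul_assoc] at H
    exact ⟨_, H⟩
  set C' : ℝ := max C 0 with hC'
  have hC'0 : 0 ≤ C' := le_max_right _ _
  set D : ℝ := ((2 * π)^2)⁻¹ * ((2 * π)^3 * C') with hD
  have hD0 : 0 ≤ D := by positivity
  have hdecay : ∀ p : E3, 1 ≤ ‖p‖ → ‖jhat ‖p‖ p‖ ≤ D / ‖p‖^3 := by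
    intro p hs
    set s := ‖p‖ with hsdef
    have h0s : (0:ℝ) < s := lt_of_lt_of_le one_pos hs
    have hL : Lpair ((p, (-1:ℝ)) : E3 × ℝ) ((p, s) : E3 × ℝ) = (2 * π)⁻¹ * (s^2 + s) := by
      rw [Lpair_apply]
      simp only [real_inner_self_eq_norm_sq]
      ring
    have hv : ‖((p, (-1:ℝ)) : E3 × ℝ)‖ = s := by
      rw [Prod.norm_def]
      simp only [norm_neg, norm_one]
      exact max_eq_left hs
    have hkey : ((2 * π)⁻¹ * (s^2 + s))^3 * ‖F (p, s)‖ ≤ s^3 * C' := by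
      have h1 := hC ((p, (-1:ℝ)) : E3 × ℝ) ((p, s) : E3 × ℝ)
      rw [hL, hv,
        _root_.abs_of_nonneg (by positivity : (0:ℝ) ≤ (2 * π)⁻¹ * (s^2 + s))] at h1
      exact h1.trans (mul_le_mul_of_nonneg_left (le_max_left _ _) (by positivity))
    have hFbd : ‖F (p, s)‖ ≤ (2 * π)^3 * C' / s^3 := by
      rw [le_div_iff₀ (by positivity)]
      have hs3 : (0:ℝ) < s^3 := by positivity
      refine le_of_mul_le_mul_left ?_ hs3
      calc s^3 * (‖F (p, s)‖ * s^3) = (s^2)^3 * ‖F (p, s)‖ := by ring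
        _ ≤ (s^2 + s)^3 * ‖F (p, s)‖ := by
            gcongr
            linarith
        _ = (2 * π)^3 * (((2 * π)⁻¹ * (s^2 + s))^3 * ‖F (p, s)‖) := by
            field_simp
        _ ≤ (2 * π)^3 * (s^3 * C') := by
            exact mul_le_mul_of_nonneg_left hkey (by positivity)
        _ = s^3 * ((2 * π)^3 * C') := by ring
    calc ‖jhat s p‖ = ((2 * π)^2)⁻¹ * ‖F (p, s)‖ := normkey s p
      _ ≤ ((2 * π)^2)⁻¹ * ((2 * π)^3 * C' / s^3) := by gcongr
      _ = D / s^3 := by rw [hD]; ring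
  -- split the integral into the unit ball and its complement
  rw [← lintegral_add_compl (fun p : E3 => ENNReal.ofReal (‖jhat ‖p‖ p‖^2 / (2 * ‖p‖)))
    (measurableSet_ball (x := (0:E3)) (ε := 1))]
  refine ENNReal.add_lt_top.2 ⟨?_, ?_⟩
  · -- ball part
    have hb : ∀ p : E3, ENNReal.ofReal (‖jhat ‖p‖ p‖^2 / (2 * ‖p‖)) ≤
        ENNReal.ofReal (A^2 / 2) * ENNReal.ofReal ‖p‖⁻¹ := by
      intro p
      rw [← ENNReal.ofReal_mul (by positivity)]
      apply ENNReal.ofReal_le_ofReal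
      rcases eq_or_lt_of_le (norm_nonneg p) with h0 | h0
      · rw [← h0]; simp
      · have h1 : ‖jhat ‖p‖ p‖^2 / (2 * ‖p‖) ≤ A^2 / (2 * ‖p‖) := by
          gcongr
          exact hAbd _ _
        refine h1.trans (le_of_eq ?_)
        field_simp
    calc ∫⁻ p : E3 in Metric.ball 0 1, ENNReal.ofReal (‖jhat ‖p‖ p‖^2 / (2 * ‖p‖))
        ≤ ∫⁻ p : E3 in Metric.ball 0 1, ENNReal.ofReal (A^2 / 2) * ENNReal.ofReal ‖p‖⁻¹ :=
          setLIntegral_mono (measurable_norm.inv.ennreal_ofReal.const_mul _) (fun p _ => hb p)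
      _ = ENNReal.ofReal (A^2 / 2) * ∫⁻ p : E3 in Metric.ball 0 1, ENNReal.ofReal ‖p‖⁻¹ :=
          lintegral_const_mul _ measurable_norm.inv.ennreal_ofReal
      _ < ⊤ := ENNReal.mul_lt_top ENNReal.ofReal_lt_top ball_lintegral_inv_norm_lt_top
  · -- complement part
    have hb2 : ∀ p : E3, p ∈ (Metric.ball (0:E3) 1)ᶜ →
        ENNReal.ofReal (‖jhat ‖p‖ p‖^2 / (2 * ‖p‖)) ≤
        ENNReal.ofReal (64 * D^2) * ENNReal.ofReal ((1 + ‖p‖) ^ (-7 : ℝ)) := by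
      intro p hp
      have hs : 1 ≤ ‖p‖ := by
        simpa [Metric.mem_ball, dist_zero_right] using hp
      set s := ‖p‖ with hsdef
      have h0s : (0:ℝ) < s := lt_of_lt_of_le one_pos hs
      rw [← ENNReal.ofReal_mul (by positivity)]
      apply ENNReal.ofReal_le_ofReal
      have hrp : (1 + s) ^ (-7 : ℝ) = ((1 + s) ^ (7:ℕ))⁻¹ := by
        rw [← Real.rpow_natCast (1 + s) 7, ← Real.rpow_neg (by positivity)]
        norm_num
      have hj2 : ‖jhat s p‖^2 ≤ (D / s^3)^2 :=
        pow_le_pow_left₀ (norm_nonneg _) (hdecay p hs) 2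
      have h2s : (1 + s)^(7:ℕ) ≤ 128 * s^7 := by
        calc (1 + s)^(7:ℕ) ≤ (2 * s)^(7:ℕ) :=
              pow_le_pow_left₀ (by positivity) (by linarith) 7
          _ = 128 * s^7 := by ring
      calc ‖jhat s p‖^2 / (2 * s) ≤ (D / s^3)^2 / (2 * s) := by gcongr
        _ = D^2 / (2 * s^7) := by
            rw [div_pow]
            rw [div_div]
            congr 1
            ring
        _ ≤ 64 * D^2 * ((1 + s)^(7:ℕ))⁻¹ := by
            rw [← div_eq_mul_inv, div_le_div_iff₀ (by positivity) (by positivity)]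
            nlinarith [mul_le_mul_of_nonneg_left h2s (sq_nonneg D)]
        _ = 64 * D^2 * (1 + s) ^ (-7 : ℝ) := by rw [hrp]
    calc ∫⁻ p : E3 in (Metric.ball (0:E3) 1)ᶜ, ENNReal.ofReal (‖jhat ‖p‖ p‖^2 / (2 * ‖p‖))
        ≤ ∫⁻ p : E3 in (Metric.ball (0:E3) 1)ᶜ,
            ENNReal.ofReal (64 * D^2) * ENNReal.ofReal ((1 + ‖p‖) ^ (-7 : ℝ)) :=
          setLIntegral_mono
            (((measurable_const.add measurable_norm).pow_const _).ennreal_ofReal.const_mul _) hb2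
      _ ≤ ∫⁻ p : E3, ENNReal.ofReal (64 * D^2) * ENNReal.ofReal ((1 + ‖p‖) ^ (-7 : ℝ)) :=
          lintegral_mono' Measure.restrict_le_self (le_refl _)
      _ = ENNReal.ofReal (64 * D^2) * ∫⁻ p : E3, ENNReal.ofReal ((1 + ‖p‖) ^ (-7 : ℝ)) :=
          lintegral_const_mul _
            ((measurable_const.add measurable_norm).pow_const _).ennreal_ofReal
      _ < ⊤ := by
          refine ENNReal.mul_lt_top ENNReal.ofReal_lt_top ?_
          have h37 : ((Module.finrank ℝ E3 : ℝ)) < 7 := by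
            rw [finrank_euclideanSpace_fin]; norm_num
          exact finite_integral_one_add_norm h37
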